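/- arXiv:2106.08775 — 9 statements merged into one kernel-verified Lean document; each statement's English description precedes it below -/
import Mathlib

section
/- Let 0 ≤ β < 1, let v ∈ ℝ^k be a unit vector, and let g ∈ ℝ^k be nonzero. Set y = ‖g‖₂, u = −g/y, w = ‖(1+β)u − βv‖₂, and v̂ = ((1+β)u − βv)/w. Then 2⟨g, v − v̂⟩ = (y(w − β)/(1+β)) · ‖v − v̂‖₂², and consequently 2⟨g, v − v̂⟩ ≥ (y(1 − β)/(1+β)) · ‖v − v̂‖₂² ≥ 0. -/
open scoped RealInnerProductSpace

/-!
Write `g = -y • u` and `(1 + β) • u = w • v̂ + β • v`. For unit vectors `v, v̂` one has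
`2 ⟪c • v̂ + d • v, v - v̂⟫ = (d - c) ‖v - v̂‖²`, which with `c = w`, `d = β` gives the identity.
The inequality then follows from `w ≥ (1 + β) ‖u‖ - β ‖v‖ = 1`.
-/

section

variable {E : Type*} [NormedAddCommGroup E] [InnerProductSpace ℝ E]

theorem two_mul_inner_smul_add_smul_sub_of_norm_eq_one {a b : E} (ha : ‖a‖ = 1)
    (hb : ‖b‖ = 1) (c d : ℝ) :
    2 * ⟪c • b + d • a, a - b⟫ = (d - c) * ‖a - b‖ ^ 2 := by
  rw [norm_sub_sq_real, inner_add_left, inner_sub_right, inner_sub_right,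
    real_inner_smul_left, real_inner_smul_left, real_inner_smul_left, real_inner_smul_left,
    real_inner_self_eq_norm_sq, real_inner_self_eq_norm_sq, real_inner_comm a b, ha, hb]
  ring

theorem one_le_norm_one_add_smul_sub_smul {u v : E} (hu : ‖u‖ = 1) (hv : ‖v‖ = 1)
    {β : ℝ} (hβ : 0 ≤ β) : 1 ≤ ‖(1 + β) • u - β • v‖ := by
  have h := norm_sub_norm_le ((1 + β) • u) (β • v)
  rw [norm_smul, norm_smul, hu, hv, Real.norm_of_nonneg hβ,
    Real.norm_of_nonneg (by linarith)] at h
  linarith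

end

theorem single_update_objective_identity {k : ℕ} (β : ℝ) (hβ0 : 0 ≤ β) (hβ1 : β < 1)
    (v g : EuclideanSpace ℝ (Fin k)) (hv : ‖v‖ = 1) (hg : g ≠ 0)
    (y w : ℝ) (u vh : EuclideanSpace ℝ (Fin k))
    (hy : y = ‖g‖) (hu : u = -(y⁻¹ • g))
    (hw : w = ‖(1 + β) • u - β • v‖)
    (hvh : vh = w⁻¹ • ((1 + β) • u - β • v)) :
    2 * ⟪g, v - vh⟫ = y * (w - β) / (1 + β) * ‖v - vh‖ ^ 2 ∧
    2 * ⟪g, v - vh⟫ ≥ y * (1 - β) / (1 + β) * ‖v - vh‖ ^ 2 ∧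
    y * (1 - β) / (1 + β) * ‖v - vh‖ ^ 2 ≥ 0 := by
  have hy0 : 0 < y := hy ▸ norm_pos_iff.mpr hg
  have hg_eq : g = -(y • u) := by
    rw [hu, smul_neg, smul_smul, mul_inv_cancel₀ hy0.ne', one_smul, neg_neg]
  have hu1 : ‖u‖ = 1 := by
    rw [hu, norm_neg, norm_smul, norm_inv, Real.norm_of_nonneg hy0.le, ← hy,
      inv_mul_cancel₀ hy0.ne']
  have hw1 : 1 ≤ w := hw ▸ one_le_norm_one_add_smul_sub_smul hu1 hv hβ0
  have hvh1 : ‖vh‖ = 1 := by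
    rw [hvh, norm_smul, norm_inv, ← hw, Real.norm_of_nonneg (by linarith),
      inv_mul_cancel₀ (by linarith)]
  have hsplit : w • vh + β • v = (1 + β) • u := by
    rw [hvh, smul_smul, mul_inv_cancel₀ (by linarith), one_smul, sub_add_cancel]
  have key : 2 * ⟪g, v - vh⟫ = y * (w - β) / (1 + β) * ‖v - vh‖ ^ 2 := by
    have h := two_mul_inner_smul_add_smul_sub_of_norm_eq_one hv hvh1 w β
    rw [hsplit, real_inner_smul_left] at h
    rw [hg_eq, inner_neg_left, real_inner_smul_left]
    rw [div_mul_eq_mul_div, eq_div_iff (by linarith)]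
    linear_combination (-y) * h
  refine ⟨key, key ▸ ?_, ?_⟩
  · gcongr
  · have : 0 ≤ 1 - β := by linarith
    positivity
end

section
/- Let C ∈ ℝ^{n×n} be symmetric, β ∈ [0,1), and V ∈ ℝ^{k×n} feasible. Suppose one pass of Mixing Method++ starting from V is well-defined (y_i > 0 for all i) and produces V̂. Then f(V) − f(V̂) ≥ ((1−β)/(1+β)) · Σ_{i=1}^n y_i ‖v_i − v̂_i‖₂² ≥ 0; in particular f is non-increasing under the pass. -/
open Matrix Finset
open scoped BigOperators RealInnerProductSpace

/-- The SDP objective `f(W) = trace(C Wᵀ W) = ∑ i j, C i j ⟨w_i, w_j⟩`, expressed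
in terms of the columns `w_1, …, w_n` of `W`. -/
noncomputable def obj {n k : ℕ} (C : Matrix (Fin n) (Fin n) ℝ)
    (V : Fin n → EuclideanSpace ℝ (Fin k)) : ℝ :=
  ∑ i, ∑ j, C i j * ⟪V i, V j⟫

lemma obj_update_diff {n k : ℕ} (C : Matrix (Fin n) (Fin n) ℝ) (hC : C.IsSymm)
    (A : Fin n → EuclideanSpace ℝ (Fin k)) (i0 : Fin n) (b : EuclideanSpace ℝ (Fin k))
    (hab : ‖A i0‖ = ‖b‖) :
    obj C A - obj C (Function.update A i0 b) =
      2 * ⟪A i0 - b, ∑ j ∈ Finset.univ.erase i0, C i0 j • A j⟫ := by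
  set B := Function.update A i0 b with hB
  have hBi0 : B i0 = b := Function.update_self _ _ _
  have hBne : ∀ j : Fin n, j ≠ i0 → B j = A j := fun j hj => Function.update_of_ne hj _ _
  have expand : obj C A - obj C B =
      (∑ i, ∑ j, C i j * ⟪A i - B i, A j⟫) + (∑ i, ∑ j, C i j * ⟪B i, A j - B j⟫) := by
    rw [obj, obj, ← Finset.sum_sub_distrib, ← Finset.sum_add_distrib]
    refine Finset.sum_congr rfl fun i _ => ?_
    rw [← Finset.sum_sub_distrib, ← Finset.sum_add_distrib]
    refine Finset.sum_congr rfl fun j _ => ?_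
    rw [inner_sub_left, inner_sub_right]; ring
  have hS1 : (∑ i, ∑ j, C i j * ⟪A i - B i, A j⟫)
      = ⟪A i0 - b, ∑ j, C i0 j • A j⟫ := by
    rw [Finset.sum_eq_single_of_mem i0 (Finset.mem_univ i0)]
    · rw [inner_sum, hBi0]
      exact Finset.sum_congr rfl fun j _ => by rw [real_inner_smul_right]
    · intro i _ hi
      have : A i - B i = 0 := by rw [hBne i hi, sub_self]
      simp [this]
  have hS2 : (∑ i, ∑ j, C i j * ⟪B i, A j - B j⟫)
      = ⟪A i0 - b, ∑ i, C i0 i • B i⟫ := by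
    rw [inner_sum]
    refine Finset.sum_congr rfl fun i _ => ?_
    rw [Finset.sum_eq_single_of_mem i0 (Finset.mem_univ i0)]
    · rw [hBi0, real_inner_smul_right, hC.apply, real_inner_comm]
    · intro j _ hj
      have : A j - B j = 0 := by rw [hBne j hj, sub_self]
      simp [this]
  have hsplitA : (∑ j, C i0 j • A j)
      = (∑ j ∈ Finset.univ.erase i0, C i0 j • A j) + C i0 i0 • A i0 :=
    (Finset.sum_erase_add _ _ (Finset.mem_univ i0)).symm
  have hsplitB : (∑ j, C i0 j • B j)
      = (∑ j ∈ Finset.univ.erase i0, C i0 j • A j) + C i0 i0 • b := by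
    rw [← Finset.sum_erase_add _ _ (Finset.mem_univ i0), hBi0]
    congr 1
    exact Finset.sum_congr rfl fun j hj => by
      rw [hBne j (Finset.mem_erase.mp hj).1]
  have hzero : ⟪A i0 - b, A i0⟫ + ⟪A i0 - b, b⟫ = 0 := by
    rw [inner_sub_left, inner_sub_left, real_inner_comm b (A i0),
      real_inner_self_eq_norm_sq, real_inner_self_eq_norm_sq, hab]
    ring
  rw [expand, hS1, hS2, hsplitA, hsplitB, inner_add_right, inner_add_right,
    real_inner_smul_right, real_inner_smul_right]
  linear_combination C i0 i0 * hzero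

lemma vh_norm_one {k : ℕ} (β : ℝ) (hβ0 : 0 ≤ β)
    (v vh u : EuclideanSpace ℝ (Fin k)) (w : ℝ)
    (hv : ‖v‖ = 1) (hu1 : ‖u‖ = 1)
    (hwdef : w = ‖(1 + β) • u - β • v‖)
    (hvh : vh = w⁻¹ • ((1 + β) • u - β • v)) :
    ‖vh‖ = 1 ∧ 1 ≤ w := by
  have hβp : (0:ℝ) < 1 + β := by linarith
  have hw1 : 1 ≤ w := by
    have h1 : ‖(1 + β) • u‖ - ‖β • v‖ ≤ ‖(1 + β) • u - β • v‖ :=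
      norm_sub_norm_le _ _
    rw [norm_smul, norm_smul, hu1, hv, Real.norm_eq_abs, Real.norm_eq_abs,
      abs_of_nonneg hβp.le, abs_of_nonneg hβ0] at h1
    rw [hwdef]; linarith
  have hwpos : 0 < w := by linarith
  refine ⟨?_, hw1⟩
  rw [hvh, norm_smul, Real.norm_eq_abs, abs_of_nonneg (inv_nonneg.2 hwpos.le),
    ← hwdef, inv_mul_cancel₀ hwpos.ne']

lemma step_ineq {k : ℕ} (β : ℝ) (hβ0 : 0 ≤ β)
    (v vh u g : EuclideanSpace ℝ (Fin k)) (y w : ℝ) (hy : 0 < y)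
    (hv : ‖v‖ = 1) (hu1 : ‖u‖ = 1)
    (hwdef : w = ‖(1 + β) • u - β • v‖)
    (hvh : vh = w⁻¹ • ((1 + β) • u - β • v))
    (hgu : g = (-y) • u) :
    2 * ⟪v - vh, g⟫ ≥ (1 - β) / (1 + β) * (y * ‖v - vh‖ ^ 2) := by
  have hβp : (0:ℝ) < 1 + β := by linarith
  obtain ⟨hvh1, hw1⟩ := vh_norm_one β hβ0 v vh u w hv hu1 hwdef hvh
  have hwpos : 0 < w := by linarith
  have hwvh : w • vh = (1 + β) • u - β • v := by
    rw [hvh, smul_smul, mul_inv_cancel₀ hwpos.ne', one_smul]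
  have rel1 : w = (1 + β) * ⟪u, vh⟫ - β * ⟪v, vh⟫ := by
    have h := congrArg (fun x : EuclideanSpace ℝ (Fin k) => ⟪x, vh⟫) hwvh
    simp only [inner_sub_left, real_inner_smul_left] at h
    rw [real_inner_self_eq_norm_sq, hvh1] at h
    simpa using h
  have rel2 : w * ⟪v, vh⟫ = (1 + β) * ⟪u, v⟫ - β := by
    have h := congrArg (fun x : EuclideanSpace ℝ (Fin k) => ⟪x, v⟫) hwvh
    simp only [inner_sub_left, real_inner_smul_left] at h
    rw [real_inner_self_eq_norm_sq, hv, real_inner_comm v vh] at h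
    simpa using h
  have ht1 : ⟪v, vh⟫ ≤ 1 := by
    have := real_inner_le_norm v vh
    rwa [hv, hvh1, one_mul] at this
  have hnorm : ‖v - vh‖ ^ 2 = 2 - 2 * ⟪v, vh⟫ := by
    rw [@norm_sub_sq_real, hv, hvh1]; ring
  have hlhs : ⟪v - vh, g⟫ = (-y) * (⟪u, v⟫ - ⟪u, vh⟫) := by
    rw [hgu, real_inner_smul_right, inner_sub_left,
      real_inner_comm v u, real_inner_comm vh u]
  have key : (1 + β) * (⟪u, vh⟫ - ⟪u, v⟫) = (w - β) * (1 - ⟪v, vh⟫) := by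
    linear_combination rel2 - rel1
  have key2 : 2 * y * ((1 + β) * (⟪u, vh⟫ - ⟪u, v⟫))
      = 2 * y * ((w - β) * (1 - ⟪v, vh⟫)) := by rw [key]
  rw [ge_iff_le, hlhs, hnorm, div_mul_eq_mul_div, div_le_iff₀ hβp]
  nlinarith [key2, mul_nonneg (mul_nonneg hy.le (by linarith : (0:ℝ) ≤ 1 - ⟪v, vh⟫))
    (by linarith : (0:ℝ) ≤ w - 1)]

/-- Lemma 2 of the paper: one well-defined pass of Mixing Method++ decreases the objective
by at least `((1-β)/(1+β)) ∑ i, y_i ‖v_i - v̂_i‖²`, which is nonnegative, so `f` is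
non-increasing under the pass. -/
theorem mixing_pp_pass_decrease {n k : ℕ} (C : Matrix (Fin n) (Fin n) ℝ) (hC : C.IsSymm)
    (β : ℝ) (hβ0 : 0 ≤ β) (hβ1 : β < 1)
    (V Vh g u : Fin n → EuclideanSpace ℝ (Fin k)) (y w : Fin n → ℝ)
    (hV : ∀ i, ‖V i‖ = 1)
    (hg : ∀ i, g i = (∑ j ∈ Finset.univ.filter (fun j => j < i), C i j • Vh j) +
                     ∑ j ∈ Finset.univ.filter (fun j => i < j), C i j • V j)
    (hy : ∀ i, y i = ‖g i‖) (hypos : ∀ i, 0 < y i)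
    (hu : ∀ i, u i = -((y i)⁻¹ • g i))
    (hw : ∀ i, w i = ‖(1 + β) • u i - β • V i‖)
    (hVh : ∀ i, Vh i = (w i)⁻¹ • ((1 + β) • u i - β • V i)) :
    obj C V - obj C Vh ≥ (1 - β) / (1 + β) * ∑ i, y i * ‖V i - Vh i‖ ^ 2 ∧
    (1 - β) / (1 + β) * ∑ i, y i * ‖V i - Vh i‖ ^ 2 ≥ 0 ∧
    obj C Vh ≤ obj C V := by
  -- basic facts per column
  have hu1 : ∀ i, ‖u i‖ = 1 := by
    intro i
    rw [hu i, norm_neg, norm_smul, Real.norm_eq_abs,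
      abs_of_nonneg (inv_nonneg.2 (hypos i).le), ← hy i, inv_mul_cancel₀ (hypos i).ne']
  have hgu : ∀ i, g i = (-(y i)) • u i := by
    intro i
    rw [hu i, smul_neg, neg_smul, neg_neg, smul_smul, mul_inv_cancel₀ (hypos i).ne',
      one_smul]
  have hVh1 : ∀ i, ‖Vh i‖ = 1 := fun i =>
    (vh_norm_one β hβ0 (V i) (Vh i) (u i) (w i) (hV i) (hu1 i) (hw i) (hVh i)).1
  -- interpolating family
  set W : ℕ → Fin n → EuclideanSpace ℝ (Fin k) :=
    fun m i => if (i : ℕ) < m then Vh i else V i with hWdef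
  have hW0 : W 0 = V := by funext i; simp [hWdef]
  have hWn : W n = Vh := by funext i; simp [hWdef, i.isLt]
  -- telescoping
  have htel : obj C V - obj C Vh
      = ∑ i : Fin n, (obj C (W i) - obj C (W ((i : ℕ) + 1))) := by
    rw [Fin.sum_univ_eq_sum_range (fun m => obj C (W m) - obj C (W (m + 1))) n,
      Finset.sum_range_sub' (fun m => obj C (W m)) n, hW0, hWn]
  -- per-step update structure
  have hupdate : ∀ i : Fin n, W ((i : ℕ) + 1) = Function.update (W i) i (Vh i) := by
    intro i; funext j
    by_cases hj : j = i
    · subst hj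
      simp [hWdef, Function.update_self]
    · rw [Function.update_of_ne hj]
      have hne : (j : ℕ) ≠ (i : ℕ) := fun hc => hj (Fin.ext hc)
      simp only [hWdef]
      by_cases h2 : (j : ℕ) < (i : ℕ)
      · rw [if_pos h2, if_pos (by omega)]
      · rw [if_neg h2, if_neg (by omega)]
  have hWi : ∀ i : Fin n, W i i = V i := by
    intro i; simp [hWdef]
  have hgsum : ∀ i : Fin n, (∑ j ∈ Finset.univ.erase i, C i j • W i j) = g i := by
    intro i
    rw [← Finset.sum_filter_add_sum_filter_not (Finset.univ.erase i) (fun j => j < i)]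
    have h1 : (Finset.univ.erase i).filter (fun j => j < i)
        = Finset.univ.filter (fun j => j < i) := by
      ext j
      simp only [Finset.mem_filter, Finset.mem_erase, Finset.mem_univ, true_and, and_true]
      exact ⟨fun h => h.2, fun h => ⟨ne_of_lt h, h⟩⟩
    have h2 : (Finset.univ.erase i).filter (fun j => ¬ j < i)
        = Finset.univ.filter (fun j => i < j) := by
      ext j
      simp only [Finset.mem_filter, Finset.mem_erase, Finset.mem_univ, true_and, and_true]
      constructor
      · rintro ⟨hne, hnlt⟩
        exact lt_of_le_of_ne (not_lt.1 hnlt) (Ne.symm hne)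
      · intro h
        exact ⟨ne_of_gt h, not_lt.2 h.le⟩
    rw [h1, h2, hg i]
    congr 1
    · refine Finset.sum_congr rfl fun j hj => ?_
      have hjlt : j < i := (Finset.mem_filter.mp hj).2
      have : (j : ℕ) < (i : ℕ) := hjlt
      simp [hWdef, this]
    · refine Finset.sum_congr rfl fun j hj => ?_
      have hjgt : i < j := (Finset.mem_filter.mp hj).2
      have : ¬ (j : ℕ) < (i : ℕ) := not_lt.2 (le_of_lt hjgt)
      simp [hWdef, this]
  have hstep : ∀ i : Fin n,
      obj C (W i) - obj C (W ((i : ℕ) + 1)) = 2 * ⟪V i - Vh i, g i⟫ := by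
    intro i
    rw [hupdate i, obj_update_diff C hC (W i) i (Vh i)
      (by rw [hWi i, hV i, hVh1 i]), hWi i, hgsum i]
  have hmain : obj C V - obj C Vh
      ≥ (1 - β) / (1 + β) * ∑ i, y i * ‖V i - Vh i‖ ^ 2 := by
    rw [htel, Finset.mul_sum]
    refine Finset.sum_le_sum fun i _ => ?_
    rw [hstep i]
    exact step_ineq β hβ0 (V i) (Vh i) (u i) (g i) (y i) (w i) (hypos i)
      (hV i) (hu1 i) (hw i) (hVh i) (hgu i)
  have hnn : (1 - β) / (1 + β) * ∑ i, y i * ‖V i - Vh i‖ ^ 2 ≥ 0 := by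
    apply mul_nonneg
    · apply div_nonneg <;> linarith
    · exact Finset.sum_nonneg fun i _ =>
        mul_nonneg (hypos i).le (sq_nonneg _)
  exact ⟨hmain, hnn, by linarith⟩
end

section
/- Let C ∈ ℝ^{n×n} be symmetric, β ∈ [0,1), δ > 0, and V ∈ ℝ^{k×n} feasible. Suppose one pass of Mixing Method++ starting from V is well-defined and satisfies y_i ≥ δ for all i, producing V̂. Then f(V) − f(V̂) ≥ δ · ((1−β)/(1+β)) · ‖V − V̂‖_F². -/
open Matrix Finset
open scoped BigOperators RealInnerProductSpace

set_option maxHeartbeats 1000000 in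
lemma scalar_key (β t w y δ : ℝ) (hβ0 : 0 ≤ β) (hβ1 : β < 1) (hδ : 0 < δ) (hyδ : δ ≤ y)
    (ht1 : -1 ≤ t) (ht2 : t ≤ 1) (hw1 : 1 ≤ w)
    (hw2 : w^2 = (1+β)^2 + β^2 - 2*β*(1+β)*t) :
    δ*((1-β)/(1+β))*(2*w - 2*(1+β)*t + 2*β) ≤ 2*y*((1+β) - β*t - t*w) := by
  have h1β : (0:ℝ) < 1 + β := by linarith
  set P : ℝ := (1+β)^2 - β + β^2 + (1+β)*(1-2*β)*t with hPdef
  set Q : ℝ := (1+β)*t + 1 - β with hQdef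
  have hP : 0 ≤ P := by nlinarith [sq_nonneg β, mul_nonneg hβ0 (sub_nonneg.2 ht2)]
  have hE : P^2 - Q^2*w^2 = 2*β*(1+β)^3*(1-t)^2*(1+t) := by
    rw [hPdef, hQdef]; linear_combination (-((1+β)*t + 1 - β)^2) * hw2
  have hE2 : Q^2*w^2 ≤ P^2 := by
    nlinarith [mul_nonneg (mul_nonneg (mul_nonneg (by linarith : (0:ℝ) ≤ 2*β)
      (by positivity : (0:ℝ) ≤ (1+β)^3)) (sq_nonneg (1-t))) (by linarith : (0:ℝ) ≤ 1+t)]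
  have hw0 : (0:ℝ) < w := by linarith
  have key : Q*w ≤ P := by
    rcases le_or_gt Q 0 with hQ | hQ
    · have : Q*w ≤ 0 := mul_nonpos_of_nonpos_of_nonneg hQ hw0.le
      linarith
    · nlinarith [mul_pos hQ hw0]
  have hrhs2 : 0 ≤ w + β - (1+β)*t := by nlinarith
  have hb1 : (1-β)*(w + β - (1+β)*t) ≤ (1+β)*((1+β) - β*t - t*w) := by
    rw [hPdef, hQdef] at key; nlinarith [key]
  have hb1' : 0 ≤ (1+β) - β*t - t*w := by
    nlinarith [mul_nonneg (by linarith : (0:ℝ) ≤ 1-β) hrhs2]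
  have h : δ*((1-β)/(1+β))*(2*w - 2*(1+β)*t + 2*β) = (δ*(1-β)*(2*w - 2*(1+β)*t + 2*β))/(1+β) := by
    field_simp
  rw [h, div_le_iff₀ h1β]
  nlinarith [mul_nonneg (sub_nonneg.2 hyδ) hb1', mul_le_mul_of_nonneg_left hb1 hδ.le]

set_option maxHeartbeats 1000000 in
lemma step_key {k : ℕ} (β δ y w : ℝ) (hβ0 : 0 ≤ β) (hβ1 : β < 1) (hδ : 0 < δ)
    (g v vh u : EuclideanSpace ℝ (Fin k))
    (hv : ‖v‖ = 1) (hy : y = ‖g‖) (hypos : 0 < y) (hyδ : δ ≤ y)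
    (hu : u = -(y⁻¹ • g)) (hw : w = ‖(1+β) • u - β • v‖)
    (hvh : vh = w⁻¹ • ((1+β) • u - β • v)) :
    ‖vh‖ = 1 ∧ δ*((1-β)/(1+β)) * ‖v - vh‖^2 ≤ 2 * ⟪g, v - vh⟫ := by
  have hnu : ‖u‖ = 1 := by
    rw [hu, norm_neg, norm_smul, hy, norm_inv, Real.norm_eq_abs,
      abs_of_pos (hy ▸ hypos)]
    field_simp [hy ▸ hypos.ne']
  set t : ℝ := ⟪u, v⟫ with htdef
  have habs : |t| ≤ 1 := by
    calc |t| ≤ ‖u‖ * ‖v‖ := abs_real_inner_le_norm u v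
    _ = 1 := by rw [hnu, hv]; ring
  have ht1 : -1 ≤ t := neg_le_of_abs_le habs
  have ht2 : t ≤ 1 := le_of_abs_le habs
  have huu : ⟪u,u⟫ = 1 := by rw [real_inner_self_eq_norm_sq, hnu]; norm_num
  have hvv : ⟪v,v⟫ = 1 := by rw [real_inner_self_eq_norm_sq, hv]; norm_num
  have hvu : ⟪v,u⟫ = t := by rw [htdef, real_inner_comm]
  have hw2 : w^2 = (1+β)^2 + β^2 - 2*β*(1+β)*t := by
    rw [hw, ← real_inner_self_eq_norm_sq]
    simp only [inner_sub_left, inner_sub_right, real_inner_smul_left, real_inner_smul_right,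
      huu, hvv, hvu, ← htdef]
    ring
  have hw1 : 1 ≤ w := by
    have hw0 : 0 ≤ w := hw ▸ norm_nonneg _
    nlinarith [mul_nonneg hβ0 (by linarith : (0:ℝ) ≤ 1+β)]
  have hw0 : (0:ℝ) < w := by linarith
  have hgu : g = -(y • u) := by
    rw [hu, smul_neg, neg_neg, smul_smul, mul_inv_cancel₀ hypos.ne', one_smul]
  have hinner : ⟪g, v - vh⟫ = -(y*t) + y * (w⁻¹ * ((1+β) - β*t)) := by
    rw [hgu, hvh]
    simp only [inner_neg_left, inner_sub_right, real_inner_smul_left, real_inner_smul_right,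
      inner_sub_left, huu, hvv, hvu, ← htdef]
    ring
  have hvhn : ‖vh‖ = 1 := by
    rw [hvh, norm_smul, norm_inv, Real.norm_eq_abs, abs_of_pos hw0, ← hw,
      inv_mul_cancel₀ hw0.ne']
  have hvvh : ⟪v, vh⟫ = w⁻¹ * ((1+β)*t - β) := by
    rw [hvh]
    simp only [inner_smul_right, inner_sub_right, real_inner_smul_right, hvv, hvu]
    ring
  have hnorm : ‖v - vh‖^2 = 2 - 2*(w⁻¹ * ((1+β)*t - β)) := by
    rw [← hvvh, norm_sub_sq_real, hv, hvhn]; ring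
  refine ⟨hvhn, ?_⟩
  have key := scalar_key β t w y δ hβ0 hβ1 hδ hyδ ht1 ht2 hw1 hw2
  rw [hinner, hnorm]
  have e1 : 2 * (-(y*t) + y * (w⁻¹ * ((1+β) - β*t))) = (2*y*((1+β) - β*t - t*w))/w := by
    field_simp; ring
  have e2 : ∀ d : ℝ, d * (2 - 2*(w⁻¹ * ((1+β)*t - β)))
      = (d*(2*w - 2*(1+β)*t + 2*β))/w := by
    intro d
    rcases eq_or_ne d 0 with hd | hd
    · simp [hd]
    · field_simp [hd]
      ring
  rw [e1, e2 (δ*((1-β)/(1+β)))]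
  gcongr

set_option maxHeartbeats 400000 in
lemma obj_diff {n k : ℕ} (C : Matrix (Fin n) (Fin n) ℝ) (hC : C.IsSymm)
    (A B : Fin n → EuclideanSpace ℝ (Fin k)) (i : Fin n)
    (hAB : ∀ j, j ≠ i → A j = B j) (hn : ‖A i‖ = ‖B i‖) :
    obj C A - obj C B = 2 * ⟪∑ j ∈ Finset.univ.erase i, C i j • A j, A i - B i⟫ := by
  have hdiff : obj C A - obj C B = ∑ a, ∑ b, C a b * (⟪A a, A b⟫ - ⟪B a, B b⟫) := by
    simp only [obj, mul_sub, Finset.sum_sub_distrib]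
  rw [hdiff]
  have hsplit : ∀ (F : Fin n → ℝ), ∑ a, F a = (∑ a ∈ Finset.univ.erase i, F a) + F i := by
    intro F; rw [Finset.sum_erase_add Finset.univ F (Finset.mem_univ i)]
  rw [hsplit]
  have h1 : ∀ a ∈ Finset.univ.erase i,
      (∑ b, C a b * (⟪A a, A b⟫ - ⟪B a, B b⟫)) = C i a * ⟪A i - B i, A a⟫ := by
    intro a ha
    have hai : a ≠ i := Finset.ne_of_mem_erase ha
    have hAa : A a = B a := hAB a hai
    rw [Finset.sum_eq_single i]
    · rw [hAa, ← inner_sub_right, real_inner_comm, hC.apply]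
    · intro b _ hbi
      rw [hAB b hbi, hAa]; ring
    · intro h; exact absurd (Finset.mem_univ i) h
  rw [Finset.sum_congr rfl h1]
  have h2 : (∑ b, C i b * (⟪A i, A b⟫ - ⟪B i, B b⟫))
      = ∑ b ∈ Finset.univ.erase i, C i b * ⟪A i - B i, A b⟫ := by
    rw [hsplit (fun b => C i b * (⟪A i, A b⟫ - ⟪B i, B b⟫))]
    have hii : ⟪A i, A i⟫ - ⟪B i, B i⟫ = 0 := by
      rw [real_inner_self_eq_norm_sq, real_inner_self_eq_norm_sq, hn]; ring
    rw [hii, mul_zero, add_zero]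
    refine Finset.sum_congr rfl fun b hb => ?_
    have hbi : b ≠ i := Finset.ne_of_mem_erase hb
    rw [hAB b hbi, ← inner_sub_left]
  rw [h2, sum_inner, Finset.mul_sum, ← Finset.sum_add_distrib]
  refine Finset.sum_congr rfl fun b _ => ?_
  rw [real_inner_smul_left, real_inner_comm]
  ring

set_option maxHeartbeats 1000000 in
set_option maxRecDepth 10000 in
/-- Under the non-degeneracy assumption `y_i ≥ δ`, one pass of Mixing Method++ decreases
the objective by at least `δ · ((1-β)/(1+β)) · ‖V - V̂‖_F²`
(the Frobenius norm squared being the sum of the squared column norms). -/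
theorem mixing_pp_pass_decrease_frobenius {n k : ℕ} (C : Matrix (Fin n) (Fin n) ℝ)
    (hC : C.IsSymm)
    (β : ℝ) (hβ0 : 0 ≤ β) (hβ1 : β < 1) (δ : ℝ) (hδ : 0 < δ)
    (V Vh g u : Fin n → EuclideanSpace ℝ (Fin k)) (y w : Fin n → ℝ)
    (hV : ∀ i, ‖V i‖ = 1)
    (hg : ∀ i, g i = (∑ j ∈ Finset.univ.filter (fun j => j < i), C i j • Vh j) +
                     ∑ j ∈ Finset.univ.filter (fun j => i < j), C i j • V j)
    (hy : ∀ i, y i = ‖g i‖) (hypos : ∀ i, 0 < y i) (hydelta : ∀ i, δ ≤ y i)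
    (hu : ∀ i, u i = -((y i)⁻¹ • g i))
    (hw : ∀ i, w i = ‖(1 + β) • u i - β • V i‖)
    (hVh : ∀ i, Vh i = (w i)⁻¹ • ((1 + β) • u i - β • V i)) :
    obj C V - obj C Vh ≥ δ * ((1 - β) / (1 + β)) * ∑ i, ‖V i - Vh i‖ ^ 2 := by
  have hstep := fun i => step_key β δ (y i) (w i) hβ0 hβ1 hδ (g i) (V i) (Vh i) (u i)
    (hV i) (hy i) (hypos i) (hydelta i) (hu i) (hw i) (hVh i)
  -- interpolating sequence
  set M : ℕ → Fin n → EuclideanSpace ℝ (Fin k) :=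
    fun m j => if (j : ℕ) < m then Vh j else V j with hM
  have hM0 : M 0 = V := by funext j; simp [hM]
  have hMn : M n = Vh := by funext j; simp [hM, j.isLt]
  -- per-step identity
  have hstep_eq : ∀ i : Fin n,
      obj C (M i) - obj C (M ((i : ℕ) + 1)) = 2 * ⟪g i, V i - Vh i⟫ := by
    intro i
    have hAB : ∀ j, j ≠ i → M (i : ℕ) j = M ((i : ℕ) + 1) j := by
      intro j hj
      have : (j : ℕ) ≠ (i : ℕ) := fun h => hj (Fin.ext h)
      simp only [hM]
      rcases lt_or_ge (j : ℕ) (i : ℕ) with h | h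
      · rw [if_pos h, if_pos (by omega)]
      · rw [if_neg (by omega), if_neg (by omega)]
    have hAi : M (i : ℕ) i = V i := by simp [hM]
    have hBi : M ((i : ℕ) + 1) i = Vh i := by simp [hM]
    have hnorm : ‖M (i : ℕ) i‖ = ‖M ((i : ℕ) + 1) i‖ := by
      rw [hAi, hBi, hV i, (hstep i).1]
    have hG : ∑ j ∈ Finset.univ.erase i, C i j • M (i : ℕ) j = g i := by
      rw [hg i]
      rw [← Finset.sum_filter_add_sum_filter_not (Finset.univ.erase i) (fun j => j < i)]
      congr 1
      · rw [show (Finset.univ.erase i).filter (fun j => j < i)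
              = Finset.univ.filter (fun j => j < i) by
            ext j
            simp only [Finset.mem_filter, Finset.mem_erase, Finset.mem_univ, true_and, and_true]
            exact ⟨fun h => h.2, fun h => ⟨Fin.ne_of_lt h, h⟩⟩]
        refine Finset.sum_congr rfl fun j hj => ?_
        have hlt : (j : ℕ) < (i : ℕ) := Fin.lt_def.1 (Finset.mem_filter.1 hj).2
        simp only [hM]
        rw [if_pos hlt]
      · rw [show (Finset.univ.erase i).filter (fun j => ¬ j < i)
              = Finset.univ.filter (fun j => i < j) by
            ext j
            simp only [Finset.mem_filter, Finset.mem_erase, Finset.mem_univ, true_and, and_true]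
            exact ⟨fun h => lt_of_le_of_ne (not_lt.1 h.2) (Ne.symm h.1),
              fun h => ⟨Fin.ne_of_gt h, not_lt.2 h.le⟩⟩]
        refine Finset.sum_congr rfl fun j hj => ?_
        have hgt : (i : ℕ) < (j : ℕ) := Fin.lt_def.1 (Finset.mem_filter.1 hj).2
        have hnot : ¬ (j : ℕ) < (i : ℕ) := by omega
        simp only [hM]
        rw [if_neg hnot]
    rw [obj_diff C hC (M (i : ℕ)) (M ((i : ℕ) + 1)) i hAB hnorm, hG, hAi, hBi]
  -- telescoping
  have htel : obj C V - obj C Vh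
      = ∑ i : Fin n, (obj C (M (i : ℕ)) - obj C (M ((i : ℕ) + 1))) := by
    rw [Fin.sum_univ_eq_sum_range (fun m => obj C (M m) - obj C (M (m + 1)))]
    rw [Finset.sum_range_sub' (fun m => obj C (M m))]
    rw [hM0, hMn]
  rw [htel, Finset.mul_sum, ge_iff_le]
  refine Finset.sum_le_sum fun i _ => ?_
  rw [hstep_eq i]
  exact (hstep i).2
end

section
/- Let C ∈ ℝ^{n×n} be symmetric, β ∈ [0,1), and V ∈ ℝ^{k×n} feasible, with a well-defined pass of Mixing Method++ from V. For i ∈ {1,…,n+1} let Z_i(V) denote the partially updated matrix with columns v̂_1,…,v̂_{i−1}, v_i,…,v_n. Then for every i ∈ {1,…,n}, f(Z_{i+1}(V)) ≤ f(Z_i(V)); in particular f(Z_i(V)) ≤ f(V) for every i. -/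
/-!
Replacing the column `v_i` by a vector `x` of the same norm changes `f` by
`2⟪x - v_i, g_i⟫`, because `g_i` is exactly the `C`-weighted sum of the other columns of the
current matrix `Z_i`. Writing `g_i = -‖g_i‖ u_i`, the step `Z_i → Z_{i+1}` therefore
decreases `f` as soon as `⟪v_i, u_i⟫ ≤ ⟪v̂_i, u_i⟫`. For `β ≤ 1` this holds: with
`s = ⟪v_i, u_i⟫` and `w = ‖(1+β)u_i - βv_i‖`, it reads `s w ≤ 1 + β - β s`, and
`(1 + β - β s)² - (s w)² = (1 - s²)(1 + β)(1 + β - 2β s) ≥ 0`.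
-/

open Matrix Finset
open scoped BigOperators RealInnerProductSpace

section Objective

variable {n k : ℕ} {C : Matrix (Fin n) (Fin n) ℝ}

theorem obj_eq_add_sum_erase (hC : C.IsSymm) (Y : Fin n → EuclideanSpace ℝ (Fin k))
    (i : Fin n) :
    obj C Y = C i i * ⟪Y i, Y i⟫ + 2 * ⟪Y i, ∑ j ∈ univ.erase i, C i j • Y j⟫ +
      ∑ a ∈ univ.erase i, ∑ b ∈ univ.erase i, C a b * ⟪Y a, Y b⟫ := by
  have hrow : ∀ a, ∑ b, C a b * ⟪Y a, Y b⟫ =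
      C a i * ⟪Y a, Y i⟫ + ∑ b ∈ univ.erase i, C a b * ⟪Y a, Y b⟫ := fun a =>
    (add_sum_erase _ _ (mem_univ i)).symm
  have hcol : ∑ a ∈ univ.erase i, C a i * ⟪Y a, Y i⟫ =
      ⟪Y i, ∑ j ∈ univ.erase i, C i j • Y j⟫ := by
    rw [inner_sum]
    refine sum_congr rfl fun a _ => ?_
    rw [real_inner_smul_right, hC.apply a i, real_inner_comm]
  rw [obj, ← add_sum_erase _ _ (mem_univ i), hrow, sum_congr rfl fun a _ => hrow a,
    sum_add_distrib, hcol, inner_sum]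
  simp only [real_inner_smul_right]
  ring

theorem obj_update_eq (hC : C.IsSymm) (Y : Fin n → EuclideanSpace ℝ (Fin k)) (i : Fin n)
    {x : EuclideanSpace ℝ (Fin k)} (hx : ‖x‖ = ‖Y i‖) :
    obj C (Function.update Y i x) =
      obj C Y + 2 * ⟪x - Y i, ∑ j ∈ univ.erase i, C i j • Y j⟫ := by
  have hrest : ∀ j ∈ univ.erase i, Function.update Y i x j = Y j := fun j hj =>
    Function.update_of_ne (ne_of_mem_erase hj) x Y
  rw [obj_eq_add_sum_erase hC _ i, obj_eq_add_sum_erase hC Y i, Function.update_self,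
    sum_congr rfl fun j hj => by rw [hrest j hj],
    sum_congr rfl fun a ha => sum_congr rfl fun b hb => by rw [hrest a ha, hrest b hb],
    real_inner_self_eq_norm_sq, real_inner_self_eq_norm_sq, hx, inner_sub_left]
  ring

end Objective

section MomentumStep

variable {E : Type*} [NormedAddCommGroup E] [InnerProductSpace ℝ E]

noncomputable def momentumStep (β : ℝ) (u v : E) : E :=
  ‖(1 + β) • u - β • v‖⁻¹ • ((1 + β) • u - β • v)

theorem one_le_norm_momentum {β : ℝ} (hβ : 0 ≤ β) {u v : E} (hu : ‖u‖ = 1) (hv : ‖v‖ = 1) :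
    1 ≤ ‖(1 + β) • u - β • v‖ := by
  have h := norm_sub_norm_le ((1 + β) • u) (β • v)
  rw [norm_smul, norm_smul, hu, hv, Real.norm_of_nonneg hβ,
    Real.norm_of_nonneg (by linarith)] at h
  linarith

theorem norm_momentumStep {β : ℝ} (hβ : 0 ≤ β) {u v : E} (hu : ‖u‖ = 1) (hv : ‖v‖ = 1) :
    ‖momentumStep β u v‖ = 1 :=
  norm_smul_inv_norm (norm_pos_iff.mp (one_pos.trans_le (one_le_norm_momentum hβ hu hv)))

-- `s = ⟪v, u⟫` and `w = ‖(1+β)u - βv‖` in `inner_le_inner_momentumStep`.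
theorem mul_le_of_sq_eq_momentum {β s w : ℝ} (hβ0 : 0 ≤ β) (hβ1 : β ≤ 1) (hs : |s| ≤ 1)
    (hw2 : w ^ 2 = (1 + β) ^ 2 - 2 * β * (1 + β) * s + β ^ 2) :
    s * w ≤ 1 + β - β * s := by
  obtain ⟨hs0, hs1⟩ := abs_le.mp hs
  have hrhs : 0 ≤ 1 + β - β * s := by nlinarith
  refine le_of_sq_le_sq ?_ hrhs
  have hdiff : (1 + β - β * s) ^ 2 - (s * w) ^ 2 =
      (1 - s ^ 2) * ((1 + β) * (1 + β - 2 * β * s)) := by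
    linear_combination (-s ^ 2) * hw2
  have : 0 ≤ (1 - s ^ 2) * ((1 + β) * (1 + β - 2 * β * s)) :=
    mul_nonneg (by nlinarith) (mul_nonneg (by linarith) (by nlinarith))
  linarith

theorem inner_le_inner_momentumStep {β : ℝ} (hβ0 : 0 ≤ β) (hβ1 : β ≤ 1) {u v : E}
    (hu : ‖u‖ = 1) (hv : ‖v‖ = 1) :
    ⟪v, u⟫ ≤ ⟪momentumStep β u v, u⟫ := by
  have hs : |⟪v, u⟫| ≤ 1 := by simpa [hu, hv] using abs_real_inner_le_norm v u
  have hw2 : ‖(1 + β) • u - β • v‖ ^ 2 = (1 + β) ^ 2 - 2 * β * (1 + β) * ⟪v, u⟫ + β ^ 2 := by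
    rw [norm_sub_sq_real, norm_smul, norm_smul, hu, hv, Real.norm_of_nonneg hβ0,
      Real.norm_of_nonneg (by linarith), real_inner_smul_left, real_inner_smul_right,
      real_inner_comm]
    ring
  set w := ‖(1 + β) • u - β • v‖
  have hwpos : 0 < w := one_pos.trans_le (one_le_norm_momentum hβ0 hu hv)
  have hinner : ⟪momentumStep β u v, u⟫ = w⁻¹ * (1 + β - β * ⟪v, u⟫) := by
    rw [momentumStep, real_inner_smul_left, inner_sub_left, real_inner_smul_left,
      real_inner_smul_left, real_inner_self_eq_norm_sq, hu]
    ring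
  rw [hinner, le_inv_mul_iff₀ hwpos, mul_comm]
  exact mul_le_of_sq_eq_momentum hβ0 hβ1 hs hw2

end MomentumStep

section PartialUpdate

variable {n : ℕ} {α : Type*}

-- With 0-indexed columns, the paper's `Z_{t+1}(V)` is `partialUpdate V̂ V t`.
def partialUpdate (A B : Fin n → α) (t : ℕ) : Fin n → α :=
  fun j => if (j : ℕ) < t then A j else B j

@[simp]
theorem partialUpdate_zero (A B : Fin n → α) : partialUpdate A B 0 = B := by
  funext j
  simp [partialUpdate]

@[simp]
theorem partialUpdate_val_self (A B : Fin n → α) (i : Fin n) : partialUpdate A B i i = B i := by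
  simp [partialUpdate]

theorem partialUpdate_val_succ (A B : Fin n → α) (i : Fin n) :
    partialUpdate A B (i + 1) = Function.update (partialUpdate A B i) i (A i) := by
  funext j
  rcases lt_trichotomy j i with h | rfl | h
  · have := Fin.lt_def.mp h
    rw [Function.update_of_ne h.ne, partialUpdate, partialUpdate, if_pos this, if_pos (by omega)]
  · simp [partialUpdate]
  · have := Fin.lt_def.mp h
    rw [Function.update_of_ne h.ne', partialUpdate, partialUpdate, if_neg (by omega),
      if_neg (by omega)]

theorem sum_erase_partialUpdate_val {M : Type*} [AddCommMonoid M] (f : Fin n → α → M)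
    (A B : Fin n → α) (i : Fin n) :
    ∑ j ∈ univ.erase i, f j (partialUpdate A B i j) =
      ∑ j ∈ univ.filter (· < i), f j (A j) + ∑ j ∈ univ.filter (i < ·), f j (B j) := by
  simp only [partialUpdate, ← Fin.lt_def]
  rw [sum_congr rfl fun j _ => apply_ite (f j) _ _ _, sum_ite]
  congr 2 <;> ext j <;> simp only [mem_filter, mem_erase, mem_univ, and_true, true_and,
    ne_eq, not_lt, Fin.ext_iff, Fin.lt_def] <;> omega

end PartialUpdate

/-- Along the inner loop of one well-defined pass of Mixing Method++, the objective is
non-increasing on the partially updated matrices `Z_t` (here 0-indexed: `Z t` has columns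
`v̂_j` for `j < t` and `v_j` for `j ≥ t`, so `Z 0 = V` and `Z n = V̂`). -/
theorem mixing_pp_inner_loop_monotone {n k : ℕ} (C : Matrix (Fin n) (Fin n) ℝ)
    (hC : C.IsSymm)
    (β : ℝ) (hβ0 : 0 ≤ β) (hβ1 : β < 1)
    (V Vh g u : Fin n → EuclideanSpace ℝ (Fin k)) (y w : Fin n → ℝ)
    (hV : ∀ i, ‖V i‖ = 1)
    (hg : ∀ i, g i = (∑ j ∈ Finset.univ.filter (fun j => j < i), C i j • Vh j) +
                     ∑ j ∈ Finset.univ.filter (fun j => i < j), C i j • V j)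
    (hy : ∀ i, y i = ‖g i‖) (hypos : ∀ i, 0 < y i)
    (hu : ∀ i, u i = -((y i)⁻¹ • g i))
    (hw : ∀ i, w i = ‖(1 + β) • u i - β • V i‖)
    (hVh : ∀ i, Vh i = (w i)⁻¹ • ((1 + β) • u i - β • V i))
    (Z : ℕ → Fin n → EuclideanSpace ℝ (Fin k))
    (hZ : ∀ t, ∀ j : Fin n, Z t j = if (j : ℕ) < t then Vh j else V j) :
    (∀ t : ℕ, t < n → obj C (Z (t + 1)) ≤ obj C (Z t)) ∧
    (∀ t : ℕ, t ≤ n → obj C (Z t) ≤ obj C V) := by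
  obtain rfl : Z = partialUpdate Vh V := funext fun t => funext (hZ t)
  have hun : ∀ i, ‖u i‖ = 1 := fun i => by
    rw [hu, norm_neg, hy]
    exact norm_smul_inv_norm (norm_pos_iff.mp ((hy i).symm ▸ hypos i))
  have hgu : ∀ i, g i = -y i • u i := fun i => by
    rw [hu, smul_neg, smul_smul, neg_mul, mul_inv_cancel₀ (hypos i).ne', neg_smul, one_smul,
      neg_neg]
  have hVh' : ∀ i, Vh i = momentumStep β (u i) (V i) := fun i => by rw [hVh, hw, momentumStep]
  have hdecrease :
      ∀ t < n, obj C (partialUpdate Vh V (t + 1)) ≤ obj C (partialUpdate Vh V t) := by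
    intro t ht
    set i : Fin n := ⟨t, ht⟩
    have hinner : ⟪V i, u i⟫ ≤ ⟪Vh i, u i⟫ := hVh' i ▸
      inner_le_inner_momentumStep hβ0 hβ1.le (hun i) (hV i)
    have hnorm : ‖Vh i‖ = ‖partialUpdate Vh V i i‖ := by
      rw [partialUpdate_val_self, hV, hVh', norm_momentumStep hβ0 (hun i) (hV i)]
    have hgi : ∑ j ∈ univ.erase i, C i j • partialUpdate Vh V i j = g i :=
      (sum_erase_partialUpdate_val (fun j x => C i j • x) Vh V i).trans (hg i).symm
    rw [show t = (i : ℕ) from rfl, partialUpdate_val_succ, obj_update_eq hC _ i hnorm, hgi,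
      partialUpdate_val_self, hgu, inner_smul_right, inner_sub_left]
    have := mul_le_mul_of_nonneg_left hinner (hypos i).le
    linarith
  refine ⟨hdecrease, fun t ht => ?_⟩
  induction t with
  | zero => rw [partialUpdate_zero]
  | succ t ih => exact (hdecrease t ht).trans (ih (by omega))
end

section
/- Let C ∈ ℝ^{n×n} be symmetric, β ∈ [0,1), and V ∈ ℝ^{k×n} feasible with a well-defined pass of Mixing Method++ from V producing V̂. If V is a fixed point of the pass, i.e. V̂ = V, then for every i: w_i = 1, u_i = v_i, and Σ_{j≠i} c_{ij} v_j = −y_i v_i where y_i = ‖Σ_{j≠i} c_{ij} v_j‖₂. -/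
open Matrix Finset
open scoped BigOperators RealInnerProductSpace

/-- Observation 2 of the paper: at a fixed point `V̂ = V` of one well-defined pass of
Mixing Method++, every `w_i = 1`, every `u_i = v_i`, and the fixed-point equation
`∑_{j≠i} c_{ij} v_j = -y_i v_i` holds with `y_i = ‖∑_{j≠i} c_{ij} v_j‖₂`. -/
theorem mixing_pp_fixed_point {n k : ℕ} (C : Matrix (Fin n) (Fin n) ℝ) (hC : C.IsSymm)
    (β : ℝ) (hβ0 : 0 ≤ β) (hβ1 : β < 1)
    (V Vh g u : Fin n → EuclideanSpace ℝ (Fin k)) (y w : Fin n → ℝ)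
    (hV : ∀ i, ‖V i‖ = 1)
    (hg : ∀ i, g i = (∑ j ∈ Finset.univ.filter (fun j => j < i), C i j • Vh j) +
                     ∑ j ∈ Finset.univ.filter (fun j => i < j), C i j • V j)
    (hy : ∀ i, y i = ‖g i‖) (hypos : ∀ i, 0 < y i)
    (hu : ∀ i, u i = -((y i)⁻¹ • g i))
    (hw : ∀ i, w i = ‖(1 + β) • u i - β • V i‖)
    (hVh : ∀ i, Vh i = (w i)⁻¹ • ((1 + β) • u i - β • V i))
    (hfix : ∀ i, Vh i = V i) :
    ∀ i, w i = 1 ∧ u i = V i ∧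
      y i = ‖∑ j ∈ Finset.univ.filter (fun j => j ≠ i), C i j • V j‖ ∧
      (∑ j ∈ Finset.univ.filter (fun j => j ≠ i), C i j • V j) = -(y i • V i) := by
  intro i
  have hsplit : (Finset.univ.filter (fun j => j ≠ i)) =
      (Finset.univ.filter (fun j => j < i)) ∪ (Finset.univ.filter (fun j => i < j)) := by
    ext j
    simp only [Finset.mem_filter, Finset.mem_union, Finset.mem_univ, true_and]
    exact ne_iff_lt_or_gt
  have hdisj : Disjoint (Finset.univ.filter (fun j : Fin n => j < i))
      (Finset.univ.filter (fun j : Fin n => i < j)) := by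
    simp only [Finset.disjoint_filter]
    intro j _ h1 h2
    exact absurd (h1.trans h2) (lt_irrefl j)
  have hgi : g i = ∑ j ∈ Finset.univ.filter (fun j => j ≠ i), C i j • V j := by
    rw [hg i, hsplit, Finset.sum_union hdisj]
    simp only [hfix]
  -- norm of u i is 1
  have hyne : y i ≠ 0 := (hypos i).ne'
  have hnu : ‖u i‖ = 1 := by
    rw [hu i, norm_neg, norm_smul, norm_inv, Real.norm_eq_abs,
      abs_of_pos (hypos i), ← hy i, inv_mul_cancel₀ hyne]
  -- w i ≠ 0
  have hfixi : V i = (w i)⁻¹ • ((1 + β) • u i - β • V i) :=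
    (hfix i).symm.trans (hVh i)
  have hwne : w i ≠ 0 := by
    intro h
    rw [h, _root_.inv_zero, zero_smul] at hfixi
    have := hV i
    rw [hfixi, norm_zero] at this
    norm_num at this
  have hkey : (1 + β) • u i = (w i + β) • V i := by
    have := congrArg (fun x : EuclideanSpace ℝ (Fin k) => w i • x) hfixi
    simp only [smul_smul, mul_inv_cancel₀ hwne, one_smul] at this
    calc (1 + β) • u i = w i • V i + β • V i := by rw [this]; abel
      _ = (w i + β) • V i := (add_smul _ _ _).symm
  have h1β : (0:ℝ) < 1 + β := by linarith
  have hwpos : 0 ≤ w i := by rw [hw i]; exact norm_nonneg _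
  have hw1 : w i = 1 := by
    have hn := congrArg norm hkey
    rw [norm_smul, norm_smul, hnu, hV i, mul_one, mul_one, Real.norm_eq_abs,
      Real.norm_eq_abs, abs_of_pos h1β, abs_of_nonneg (by linarith : (0:ℝ) ≤ w i + β)] at hn
    linarith
  have huV : u i = V i := by
    rw [hw1] at hkey
    have := smul_right_injective (EuclideanSpace ℝ (Fin k)) h1β.ne' hkey
    exact this
  have hgV : g i = -(y i • V i) := by
    have := huV
    rw [hu i] at this
    have h2 := congrArg (fun x : EuclideanSpace ℝ (Fin k) => y i • x) this
    simp only [smul_neg, smul_smul, mul_inv_cancel₀ hyne, one_smul] at h2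
    exact neg_eq_iff_eq_neg.mp h2
  refine ⟨hw1, huV, ?_, ?_⟩
  · rw [hy i, hgi]
  · rw [← hgi, hgV]
end

section
/- Let V ∈ ℝ^{k×n}, let S ∈ ℝ^{n×n} be a nonzero symmetric positive semidefinite matrix with smallest nonzero eigenvalue λ⁺(S), and let R ∈ ℝ^{n×n} with smallest singular value σ_min(R). Then ‖V S R‖_F² ≥ σ_min(R)² · λ⁺(S) · trace(V S Vᵀ). -/
open Matrix

/-!
Since `S` is positive semidefinite with nonzero eigenvalues at least `λ⁺`, the matrix
`S² - λ⁺ S = f(S)` with `f(x) = x (x - λ⁺) ≥ 0` on the spectrum is positive semidefinite, so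
`λ⁺ · trace (V S Vᵀ) ≤ trace (V S² Vᵀ) = ‖V S‖_F²`. Applying the singular value bound
`σ² ‖x‖² ≤ ‖xᵀ R‖²` to every row `x` of `V S` gives `σ² ‖V S‖_F² ≤ ‖V S R‖_F²`.
-/

namespace Matrix

variable {m n o : Type*} [Fintype m] [Fintype n]

theorem sum_sum_sq_eq_trace_mul_transpose {R : Type*} [CommSemiring R] (A : Matrix m n R) :
    ∑ i, ∑ j, A i j ^ 2 = trace (A * Aᵀ) := by
  simp only [trace, diag_apply, mul_apply, transpose_apply, sq]

theorem sq_mul_sum_sum_sq_le_sum_sum_sq_mul [Fintype o] {c : ℝ} (A : Matrix m n ℝ)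
    {R : Matrix n o ℝ} (hR : ∀ x : n → ℝ, c ^ 2 * (x ⬝ᵥ x) ≤ (x ᵥ* R) ⬝ᵥ (x ᵥ* R)) :
    c ^ 2 * ∑ i, ∑ j, A i j ^ 2 ≤ ∑ i, ∑ k, (A * R) i k ^ 2 := by
  rw [Finset.mul_sum]
  refine Finset.sum_le_sum fun i _ => ?_
  simpa only [dotProduct, mul_apply_eq_vecMul, sq] using hR (A i)

theorem trace_mul_mul_transpose_le_of_posSemidef_sub {A B : Matrix n n ℝ}
    (hAB : (B - A).PosSemidef) (V : Matrix m n ℝ) :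
    trace (V * A * Vᵀ) ≤ trace (V * B * Vᵀ) := by
  have h := (hAB.mul_mul_conjTranspose_same V).trace_nonneg
  rwa [conjTranspose_eq_transpose_of_trivial, Matrix.mul_sub, Matrix.sub_mul, trace_sub, sub_nonneg] at h

open scoped MatrixOrder in
theorem PosSemidef.posSemidef_mul_self_sub_smul [DecidableEq n] {S : Matrix n n ℝ}
    (hS : S.PosSemidef) {lam : ℝ} (hlam : lam ∈ lowerBounds {μ | μ ≠ 0 ∧ μ ∈ spectrum ℝ S}) :
    (S * S - lam • S).PosSemidef := by
  have hcfc : cfc (fun x : ℝ => x * (x - lam)) S = S * S - lam • S := by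
    rw [cfc_mul .., cfc_sub .., cfc_id' .., cfc_const ..]
    simp [mul_sub, Algebra.algebraMap_eq_smul_one]
  rw [← nonneg_iff_posSemidef, ← hcfc]
  refine cfc_nonneg fun x hx => ?_
  rcases eq_or_ne x 0 with rfl | hx0
  · simp
  · exact mul_nonneg (spectrum_nonneg_of_nonneg hS.nonneg hx) (sub_nonneg.mpr (hlam ⟨hx0, hx⟩))

end Matrix

theorem frobenius_lower_bound_VSR_general {k n : ℕ} (V : Matrix (Fin k) (Fin n) ℝ)
    (S : Matrix (Fin n) (Fin n) ℝ) (hS : S.PosSemidef)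
    (lam : ℝ) (hlam : IsLeast {μ : ℝ | μ ≠ 0 ∧ μ ∈ spectrum ℝ S} lam)
    (R : Matrix (Fin n) (Fin n) ℝ) (σmin : ℝ)
    (hσ : IsGreatest {c : ℝ | 0 ≤ c ∧ ∀ x : Fin n → ℝ,
        c ^ 2 * (x ⬝ᵥ x) ≤ (Matrix.vecMul x R) ⬝ᵥ (Matrix.vecMul x R)} σmin) :
    ∑ p, ∑ q, ((V * S * R) p q) ^ 2 ≥ σmin ^ 2 * lam * Matrix.trace (V * S * Vᵀ) := by
  have htrace : lam * trace (V * S * Vᵀ) ≤ trace (V * S * (V * S)ᵀ) := by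
    have h := trace_mul_mul_transpose_le_of_posSemidef_sub
      (hS.posSemidef_mul_self_sub_smul hlam.2) V
    have hSt : Sᵀ = S := hS.isHermitian
    rw [transpose_mul, hSt, ← Matrix.mul_assoc, Matrix.mul_assoc V S S]
    rwa [Matrix.mul_smul, Matrix.smul_mul, trace_smul, smul_eq_mul] at h
  calc σmin ^ 2 * lam * trace (V * S * Vᵀ)
      = σmin ^ 2 * (lam * trace (V * S * Vᵀ)) := mul_assoc _ _ _
    _ ≤ σmin ^ 2 * ∑ p, ∑ q, (V * S) p q ^ 2 := by
      rw [sum_sum_sq_eq_trace_mul_transpose]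
      gcongr
    _ ≤ ∑ p, ∑ q, (V * S * R) p q ^ 2 := sq_mul_sum_sum_sq_le_sum_sum_sq_mul _ hσ.1.2

/-- Lower bound `‖V S R‖_F² ≥ σ_min(R)² · λ⁺(S) · trace(V S Vᵀ)` for a nonzero PSD
matrix `S` with smallest nonzero eigenvalue `lam` and a matrix `R` whose smallest
singular value is `σmin` (characterized as the greatest `c ≥ 0` with
`c² (xᵀx) ≤ ‖xᵀR‖²` for all `x`). -/
theorem frobenius_lower_bound_VSR {k n : ℕ} (V : Matrix (Fin k) (Fin n) ℝ)
    (S : Matrix (Fin n) (Fin n) ℝ) (hS : S.PosSemidef) (hS0 : S ≠ 0)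
    (lam : ℝ) (hlam : IsLeast {μ : ℝ | μ ≠ 0 ∧ μ ∈ spectrum ℝ S} lam)
    (R : Matrix (Fin n) (Fin n) ℝ) (σmin : ℝ)
    (hσ : IsGreatest {c : ℝ | 0 ≤ c ∧ ∀ x : Fin n → ℝ,
        c ^ 2 * (x ⬝ᵥ x) ≤ (Matrix.vecMul x R) ⬝ᵥ (Matrix.vecMul x R)} σmin) :
    ∑ p, ∑ q, ((V * S * R) p q) ^ 2 ≥ σmin ^ 2 * lam * Matrix.trace (V * S * Vᵀ) :=
  frobenius_lower_bound_VSR_general V S hS lam hlam R σmin hσ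
end

section
/- Let C ∈ ℝ^{n×n} be symmetric, β ∈ [0,1), and V ∈ ℝ^{k×n} feasible with a well-defined pass of Mixing Method++ producing V̂, with associated vectors y = (y_1,…,y_n) and w = (w_1,…,w_n). Let L be the strictly lower-triangular part of C (L_{ij} = c_{ij} for i > j, else 0), and let D_y, D_w be the diagonal matrices with diagonals y, w. Then ((1+β)L + D_w D_y) V̂ᵀ = −((1+β)Lᵀ + β D_y) Vᵀ. -/
/-!
Row `i` of the identity reads `w_i y_i v̂_i = -((1+β) g_i + β y_i v_i)`: multiply
`w_i v̂_i = (1+β) u_i - β v_i` by `y_i` and use `y_i u_i = -g_i`. Splitting `g_i` into its sums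
over `j < i` and `j > i` produces the rows of `L V̂ᵀ` and, by symmetry of `C`, of `Lᵀ Vᵀ`.
-/

open Matrix Finset

theorem norm_smul_norm_inv_smul {E : Type*} [NormedAddCommGroup E] [NormedSpace ℝ E] (x : E) :
    ‖x‖ • ‖x‖⁻¹ • x = x := by
  rcases eq_or_ne x 0 with rfl | hx
  · simp
  · exact smul_inv_smul₀ (norm_ne_zero_iff.mpr hx) x

theorem mixing_pp_step_smul {E : Type*} [NormedAddCommGroup E] [NormedSpace ℝ E]
    {β y w : ℝ} {g u v vh : E} (hy : y = ‖g‖) (hu : u = -(y⁻¹ • g))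
    (hw : w = ‖(1 + β) • u - β • v‖) (hvh : vh = w⁻¹ • ((1 + β) • u - β • v)) :
    (w * y) • vh = -((1 + β) • g + (β * y) • v) := by
  have hyu : y • u = -g := by rw [hu, smul_neg, hy, norm_smul_norm_inv_smul]
  rw [hvh, mul_comm, mul_smul, hw, norm_smul_norm_inv_smul, smul_sub, smul_comm y (1 + β),
    hyu, smul_comm y β, mul_comm, mul_smul]
  module

theorem Matrix.mul_of_ofLp {m n k : Type*} [Fintype n] (M : Matrix m n ℝ)
    (X : n → EuclideanSpace ℝ k) :
    M * (Matrix.of fun i p => X i p) = Matrix.of fun i p => (∑ j, M i j • X j) p := by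
  ext i p
  simp [Matrix.mul_apply]

theorem Matrix.sum_diagonal_apply_smul {n R E : Type*} [Fintype n] [DecidableEq n] [Semiring R]
    [AddCommMonoid E] [Module R E] (d : n → R) (X : n → E) (i : n) :
    ∑ j, diagonal d i j • X j = d i • X i := by
  simp [diagonal_apply, ite_smul]

theorem mixing_pp_matrix_representation_general {n k : ℕ}
    (C : Matrix (Fin n) (Fin n) ℝ) (hC : C.IsSymm)
    (β : ℝ)
    (V Vh g u : Fin n → EuclideanSpace ℝ (Fin k)) (y w : Fin n → ℝ)
    (hg : ∀ i, g i = (∑ j ∈ Finset.univ.filter (fun j => j < i), C i j • Vh j) +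
                     ∑ j ∈ Finset.univ.filter (fun j => i < j), C i j • V j)
    (hy : ∀ i, y i = ‖g i‖)
    (hu : ∀ i, u i = -((y i)⁻¹ • g i))
    (hw : ∀ i, w i = ‖(1 + β) • u i - β • V i‖)
    (hVh : ∀ i, Vh i = (w i)⁻¹ • ((1 + β) • u i - β • V i))
    (L : Matrix (Fin n) (Fin n) ℝ)
    (hL : ∀ i j, L i j = if j < i then C i j else 0) :
    ((1 + β) • L + Matrix.diagonal w * Matrix.diagonal y) *
        (Matrix.of fun (i : Fin n) (p : Fin k) => Vh i p) =
      -(((1 + β) • Lᵀ + β • Matrix.diagonal y) *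
        (Matrix.of fun (i : Fin n) (p : Fin k) => V i p)) := by
  have hLVh : ∀ i, ∑ j, L i j • Vh j = ∑ j ∈ univ.filter (· < i), C i j • Vh j := fun i => by
    simp only [hL, ite_smul, zero_smul, sum_filter]
  have hLV : ∀ i, ∑ j, L j i • V j = ∑ j ∈ univ.filter (i < ·), C i j • V j := fun i => by
    simp only [hL, ite_smul, zero_smul, sum_filter, hC.apply i]
  have hrow : ∀ i, ∑ j, ((1 + β) • L + diagonal fun i => w i * y i) i j • Vh j =
      -∑ j, ((1 + β) • Lᵀ + β • diagonal y) i j • V j := fun i => by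
    simp only [Matrix.add_apply, Matrix.smul_apply, transpose_apply, add_smul, sum_add_distrib,
      smul_eq_mul, mul_smul, ← smul_sum, hLVh, hLV, sum_diagonal_apply_smul]
    rw [← mul_smul (w i), mixing_pp_step_smul (hy i) (hu i) (hw i) (hVh i), hg]
    module
  rw [diagonal_mul_diagonal', mul_of_ofLp, mul_of_ofLp]
  ext i p
  simp only [of_apply, Matrix.neg_apply, hrow, PiLp.neg_apply]

/-- Matrix representation of one pass of Mixing Method++:
`((1+β)L + D_w D_y) V̂ᵀ = -((1+β)Lᵀ + β D_y) Vᵀ`, where `L` is the strictly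
lower-triangular part of `C`. Here `Vᵀ` and `V̂ᵀ` are the `n × k` matrices whose
`i`-th rows are the columns `v_i`, `v̂_i`. -/
theorem mixing_pp_matrix_representation {n k : ℕ}
    (C : Matrix (Fin n) (Fin n) ℝ) (hC : C.IsSymm)
    (β : ℝ) (hβ0 : 0 ≤ β) (hβ1 : β < 1)
    (V Vh g u : Fin n → EuclideanSpace ℝ (Fin k)) (y w : Fin n → ℝ)
    (hV : ∀ i, ‖V i‖ = 1)
    (hg : ∀ i, g i = (∑ j ∈ Finset.univ.filter (fun j => j < i), C i j • Vh j) +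
                     ∑ j ∈ Finset.univ.filter (fun j => i < j), C i j • V j)
    (hy : ∀ i, y i = ‖g i‖) (hypos : ∀ i, 0 < y i)
    (hu : ∀ i, u i = -((y i)⁻¹ • g i))
    (hw : ∀ i, w i = ‖(1 + β) • u i - β • V i‖)
    (hVh : ∀ i, Vh i = (w i)⁻¹ • ((1 + β) • u i - β • V i))
    (L : Matrix (Fin n) (Fin n) ℝ)
    (hL : ∀ i j, L i j = if j < i then C i j else 0) :
    ((1 + β) • L + Matrix.diagonal w * Matrix.diagonal y) *
        (Matrix.of fun (i : Fin n) (p : Fin k) => Vh i p) =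
      -(((1 + β) • Lᵀ + β • Matrix.diagonal y) *
        (Matrix.of fun (i : Fin n) (p : Fin k) => V i p)) :=
  mixing_pp_matrix_representation_general C hC β V Vh g u y w hg hy hu hw hVh L hL
end

section
/- Let C ∈ ℝ^{n×n} be symmetric with zero diagonal, β ∈ [0,1), and V ∈ ℝ^{k×n} feasible with a well-defined pass of Mixing Method++ producing V̂, with associated y, w. Let L be the strictly lower-triangular part of C and D_y, D_w the diagonal matrices with diagonals y, w. Then the upper-triangular matrix M := (1+β)Lᵀ + D_w D_y is invertible (its diagonal entries w_i y_i are positive), and V − V̂ = V · ((1+β)C + D_w D_y + β D_y) · M^{-1}. -/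
open Matrix Finset
open scoped BigOperators RealInnerProductSpace

private lemma sum_apply_euclid {n k : ℕ} (s : Finset (Fin n))
    (F : Fin n → EuclideanSpace ℝ (Fin k)) (p : Fin k) :
    (∑ j ∈ s, F j) p = ∑ j ∈ s, F j p := by
  induction s using Finset.cons_induction with
  | empty => rfl
  | cons a s ha ih => rw [Finset.sum_cons, Finset.sum_cons, PiLp.add_apply, ih]

private lemma sum_split {n : ℕ} (i : Fin n) (f : Fin n → ℝ) :
    ∑ j, f j = (∑ j ∈ Finset.univ.filter (fun j => j < i), f j) + f i +
      ∑ j ∈ Finset.univ.filter (fun j => i < j), f j := by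
  classical
  have h1 : (Finset.univ.filter (fun j => ¬ j < i)) =
      insert i (Finset.univ.filter (fun j => i < j)) := by
    ext j
    simp only [Finset.mem_filter, Finset.mem_univ, true_and, Finset.mem_insert, not_lt]
    constructor
    · intro h
      rcases eq_or_lt_of_le h with h | h
      · exact Or.inl h.symm
      · exact Or.inr h
    · rintro (rfl | h)
      · exact le_refl _
      · exact le_of_lt h
  rw [← Finset.sum_filter_add_sum_filter_not Finset.univ (fun j => j < i) f, h1,
    Finset.sum_insert (by simp)]
  ring

/-- Factorization of one pass of Mixing Method++: with `M = (1+β)Lᵀ + D_w D_y`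
(which is invertible), `V - V̂ = V ((1+β)C + D_w D_y + β D_y) M⁻¹`.
Here `V` and `V̂` are viewed as the `k × n` matrices with the given columns. -/
theorem mixing_pp_factorization {n k : ℕ}
    (C : Matrix (Fin n) (Fin n) ℝ) (hC : C.IsSymm) (hCdiag : ∀ i, C i i = 0)
    (β : ℝ) (hβ0 : 0 ≤ β) (hβ1 : β < 1)
    (V Vh g u : Fin n → EuclideanSpace ℝ (Fin k)) (y w : Fin n → ℝ)
    (hV : ∀ i, ‖V i‖ = 1)
    (hg : ∀ i, g i = (∑ j ∈ Finset.univ.filter (fun j => j < i), C i j • Vh j) +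
                     ∑ j ∈ Finset.univ.filter (fun j => i < j), C i j • V j)
    (hy : ∀ i, y i = ‖g i‖) (hypos : ∀ i, 0 < y i)
    (hu : ∀ i, u i = -((y i)⁻¹ • g i))
    (hw : ∀ i, w i = ‖(1 + β) • u i - β • V i‖)
    (hVh : ∀ i, Vh i = (w i)⁻¹ • ((1 + β) • u i - β • V i))
    (L : Matrix (Fin n) (Fin n) ℝ)
    (hL : ∀ i j, L i j = if j < i then C i j else 0)
    (M : Matrix (Fin n) (Fin n) ℝ)
    (hM : M = (1 + β) • Lᵀ + Matrix.diagonal w * Matrix.diagonal y) :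
    IsUnit M ∧
    (Matrix.of fun (p : Fin k) (i : Fin n) => V i p) -
        (Matrix.of fun (p : Fin k) (i : Fin n) => Vh i p) =
      (Matrix.of fun (p : Fin k) (i : Fin n) => V i p) *
        ((1 + β) • C + Matrix.diagonal w * Matrix.diagonal y + β • Matrix.diagonal y) *
        M⁻¹ := by
  classical
  -- basic norms
  have hunorm : ∀ i, ‖u i‖ = 1 := by
    intro i
    rw [hu i, norm_neg, norm_smul, hy i, norm_inv, Real.norm_eq_abs,
      abs_of_pos (by rw [← hy i]; exact hypos i)]
    rw [← hy i]
    exact inv_mul_cancel₀ (hypos i).ne'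
  have hw1 : ∀ i, 1 ≤ w i := by
    intro i
    have h := norm_sub_norm_le ((1 + β) • u i) (β • V i)
    rw [norm_smul, norm_smul, hunorm i, hV i, Real.norm_eq_abs, Real.norm_eq_abs,
      abs_of_nonneg (by linarith), abs_of_nonneg hβ0] at h
    rw [hw i]
    linarith [h]
  have hwpos : ∀ i, 0 < w i := fun i => lt_of_lt_of_le one_pos (hw1 i)
  -- M is upper triangular with positive diagonal
  have hMut : M.BlockTriangular id := by
    intro a b hab
    simp only [id] at hab
    rw [hM]
    simp only [Matrix.add_apply, Matrix.smul_apply, Matrix.transpose_apply,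
      Matrix.diagonal_mul_diagonal, Matrix.diagonal_apply, hL]
    rw [if_neg (by exact fun h => absurd (lt_trans h hab) (lt_irrefl a)),
      if_neg (by rintro rfl; exact lt_irrefl _ hab)]
    simp
  have hMdiag : ∀ i, M i i = w i * y i := by
    intro i
    rw [hM]
    simp [Matrix.diagonal_mul_diagonal, hL, Pi.mul_apply]
  have hdet : IsUnit M.det := by
    rw [Matrix.det_of_upperTriangular hMut]
    apply isUnit_iff_ne_zero.mpr
    apply Finset.prod_ne_zero_iff.mpr
    intro i _
    rw [hMdiag i]
    exact (mul_pos (hwpos i) (hypos i)).ne'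
  have hMunit : IsUnit M := (Matrix.isUnit_iff_isUnit_det M).mpr hdet
  refine ⟨hMunit, ?_⟩
  have hCsymm : ∀ a b, C a b = C b a := fun a b => hC.apply b a
  -- key pointwise identity
  have fact1 : ∀ (i : Fin n) (p : Fin k),
      (w i * y i) * Vh i p = -((1 + β) * g i p) - (β * y i) * V i p := by
    intro i p
    have hyne : y i ≠ 0 := (hypos i).ne'
    have hwne : w i ≠ 0 := (hwpos i).ne'
    have hVhp : Vh i p = (w i)⁻¹ * ((1 + β) * u i p - β * V i p) := by
      rw [hVh i]
      simp [PiLp.smul_apply, PiLp.sub_apply, smul_eq_mul]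
    have hup : u i p = -((y i)⁻¹ * g i p) := by
      rw [hu i]
      simp [PiLp.neg_apply, PiLp.smul_apply, smul_eq_mul]
    rw [hVhp, hup]
    field_simp
  have hgp : ∀ (i : Fin n) (p : Fin k),
      g i p = (∑ j ∈ Finset.univ.filter (fun j => j < i), C i j * Vh j p) +
        ∑ j ∈ Finset.univ.filter (fun j => i < j), C i j * V j p := by
    intro i p
    rw [hg i, PiLp.add_apply, sum_apply_euclid, sum_apply_euclid]
    simp [PiLp.smul_apply, smul_eq_mul]
  -- main matrix identity before inverting
  have hmain :
      ((Matrix.of fun (p : Fin k) (i : Fin n) => V i p) -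
          (Matrix.of fun (p : Fin k) (i : Fin n) => Vh i p)) * M =
      (Matrix.of fun (p : Fin k) (i : Fin n) => V i p) *
        ((1 + β) • C + Matrix.diagonal w * Matrix.diagonal y + β • Matrix.diagonal y) := by
    ext p i
    simp only [Matrix.mul_apply, Matrix.sub_apply, Matrix.add_apply, Matrix.of_apply,
      Matrix.smul_apply, Matrix.diagonal_mul_diagonal, Matrix.diagonal_apply,
      smul_eq_mul, hM, Matrix.transpose_apply, hL, Pi.mul_apply]
    have e1 :
        ∑ j, (V j p - Vh j p) *
            ((1 + β) * (if j < i then C i j else 0) +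
              (if j = i then w j * y j else 0)) =
        ((1 + β) * (∑ j ∈ Finset.univ.filter (fun j => j < i), C i j * V j p) -
          (1 + β) * (∑ j ∈ Finset.univ.filter (fun j => j < i), C i j * Vh j p)) +
          w i * y i * (V i p - Vh i p) := by
      calc ∑ j, (V j p - Vh j p) *
            ((1 + β) * (if j < i then C i j else 0) +
              (if j = i then w j * y j else 0))
          = ∑ j, ((if j < i then (1 + β) * (C i j * V j p) - (1 + β) * (C i j * Vh j p)
              else 0) + (if j = i then w j * y j * (V j p - Vh j p) else 0)) := by
            refine Finset.sum_congr rfl fun j _ => ?_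
            split_ifs <;> ring
        _ = _ := by
            rw [Finset.sum_add_distrib, ← Finset.sum_filter,
              Finset.sum_ite_eq' Finset.univ i (fun j => w j * y j * (V j p - Vh j p))]
            simp only [Finset.mem_univ, if_true]
            rw [Finset.sum_sub_distrib, Finset.mul_sum, Finset.mul_sum]
    have e2 :
        ∑ j, V j p * ((1 + β) * C j i + (if j = i then w j * y j else 0) +
            β * (if j = i then y j else 0)) =
        ((1 + β) * (∑ j ∈ Finset.univ.filter (fun j => j < i), C i j * V j p) +
          (1 + β) * (C i i * V i p) +
          (1 + β) * (∑ j ∈ Finset.univ.filter (fun j => i < j), C i j * V j p)) +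
          (w i * y i * V i p + β * y i * V i p) := by
      calc ∑ j, V j p * ((1 + β) * C j i + (if j = i then w j * y j else 0) +
            β * (if j = i then y j else 0))
          = ∑ j, ((1 + β) * (C i j * V j p) +
              (if j = i then w j * y j * V j p + β * y j * V j p else 0)) := by
            refine Finset.sum_congr rfl fun j _ => ?_
            rw [hCsymm j i]
            split_ifs <;> ring
        _ = _ := by
            rw [Finset.sum_add_distrib,
              Finset.sum_ite_eq' Finset.univ i (fun j => w j * y j * V j p + β * y j * V j p)]
            simp only [Finset.mem_univ, if_true]
            rw [sum_split i (fun j => (1 + β) * (C i j * V j p)), Finset.mul_sum,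
              Finset.mul_sum]
    rw [e1, e2, hCdiag i]
    linear_combination -fact1 i p + (1 + β) * hgp i p
  -- conclude
  have hMinv : M * M⁻¹ = 1 := Matrix.mul_nonsing_inv M hdet
  calc (Matrix.of fun (p : Fin k) (i : Fin n) => V i p) -
        (Matrix.of fun (p : Fin k) (i : Fin n) => Vh i p)
      = ((Matrix.of fun (p : Fin k) (i : Fin n) => V i p) -
          (Matrix.of fun (p : Fin k) (i : Fin n) => Vh i p)) * (M * M⁻¹) := by
        rw [hMinv, Matrix.mul_one]
    _ = _ := by rw [← Matrix.mul_assoc, hmain, Matrix.mul_assoc]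
end

section
/- Let C ∈ ℝ^{n×n} be symmetric and β ∈ [0,1). Let V⁰ ∈ ℝ^{k×n} be feasible, and suppose the iterates V^{ℓ+1} = one pass of Mixing Method++ applied to V^ℓ are well-defined for all ℓ ≥ 0 (i.e. all inner norms y_i remain positive at every step of every pass). Then the sequence (f(V^ℓ))_{ℓ≥0} is non-increasing and converges, and there exist a feasible matrix V̄ and a subsequence (V^{ℓ_m})_m converging to V̄ with f(V̄) = lim_{ℓ→∞} f(V^ℓ). -/
open Matrix Finset Filter Topology
open scoped BigOperators RealInnerProductSpace

/-- Scalar form of the per-column descent inequality for Mixing Method++. -/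
lemma key_scalar (β yv t wv : ℝ) (hβ0 : 0 ≤ β) (hβ1 : β < 1) (hy : 0 < yv)
    (ht : |t| ≤ yv) (hwp : 0 < wv)
    (hw2 : wv^2 * yv = ((1+β)^2 + β^2) * yv + 2*β*(1+β)*t) :
    wv⁻¹ * (-((1+β)*yv) - β*t) ≤ t := by
  rw [inv_mul_le_iff₀ hwp]
  rcases le_or_gt 0 t with h | h
  · nlinarith
  · set c : ℝ := -t with hc
    have hct : t = -c := by simp [hc]
    have hc0 : 0 < c := by simp [hc]; linarith
    have hcy : c ≤ yv := by have := abs_le.mp ht; linarith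
    have hR : 0 < (1+β)*yv - β*c := by nlinarith
    have hfac : 0 ≤ (1+β) * (yv - c) * (yv + c) * ((1+β)*yv - 2*β*c) := by
      have h1 : 0 ≤ (1+β)*yv - 2*β*c := by nlinarith
      have h2 : 0 ≤ yv - c := by linarith
      positivity
    have e1 : (wv*c)^2 * yv = c^2 * (((1+β)^2+β^2)*yv - 2*β*(1+β)*c) := by
      linear_combination c^2*hw2 + 2*β*(1+β)*c^2*hct
    have e2 : ((1+β)*yv - β*c)^2*yv - (wv*c)^2*yv
        = (1+β)*(yv-c)*(yv+c)*((1+β)*yv - 2*β*c) := by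
      rw [e1]; ring
    have hsq' : (wv*c)^2 ≤ ((1+β)*yv - β*c)^2 :=
      le_of_mul_le_mul_right (by linarith) hy
    have h3 : wv * c ≤ (1+β)*yv - β*c := by nlinarith [mul_pos hwp hc0]
    rw [hct]; nlinarith

/-- Decomposition of the objective isolating the `i`-th column. -/
lemma obj_decomp {n k : ℕ} (C : Matrix (Fin n) (Fin n) ℝ)
    (X : Fin n → EuclideanSpace ℝ (Fin k)) (i : Fin n) :
    obj C X = C i i * ⟪X i, X i⟫
      + ∑ q ∈ Finset.univ.erase i, C i q * ⟪X i, X q⟫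
      + ∑ p ∈ Finset.univ.erase i, C p i * ⟪X p, X i⟫
      + ∑ p ∈ Finset.univ.erase i, ∑ q ∈ Finset.univ.erase i, C p q * ⟪X p, X q⟫ := by
  unfold obj
  rw [← Finset.add_sum_erase _ _ (Finset.mem_univ i)]
  rw [← Finset.add_sum_erase _ (fun q => C i q * ⟪X i, X q⟫) (Finset.mem_univ i)]
  have : ∀ p ∈ Finset.univ.erase i,
      (∑ q, C p q * ⟪X p, X q⟫)
        = C p i * ⟪X p, X i⟫ + ∑ q ∈ Finset.univ.erase i, C p q * ⟪X p, X q⟫ := by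
    intro p _
    rw [← Finset.add_sum_erase _ (fun q => C p q * ⟪X p, X q⟫) (Finset.mem_univ i)]
  rw [Finset.sum_congr rfl this, Finset.sum_add_distrib]
  ring

/-- Change of the objective when updating a single column. -/
lemma obj_update {n k : ℕ} (C : Matrix (Fin n) (Fin n) ℝ) (hC : C.IsSymm)
    (W : Fin n → EuclideanSpace ℝ (Fin k)) (i : Fin n)
    (a : EuclideanSpace ℝ (Fin k)) :
    obj C (Function.update W i a) = obj C W
      + 2 * ⟪∑ j ∈ Finset.univ.erase i, C i j • W j, a - W i⟫
      + C i i * (⟪a, a⟫ - ⟪W i, W i⟫) := by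
  have hCs : ∀ p q, C p q = C q p := fun p q => by
    have := congrFun (congrFun hC q) p
    simpa [Matrix.transpose_apply] using this
  have hne : ∀ p ∈ Finset.univ.erase i, Function.update W i a p = W p := by
    intro p hp
    exact Function.update_of_ne (Finset.ne_of_mem_erase hp) _ _
  set A : ℝ := ∑ x ∈ Finset.univ.erase i, C i x * ⟪W x, a⟫ with hA
  set B : ℝ := ∑ x ∈ Finset.univ.erase i, C i x * ⟪W x, W i⟫ with hB
  have hip : ⟪∑ j ∈ Finset.univ.erase i, C i j • W j, a - W i⟫ = A - B := by
    rw [sum_inner, hA, hB, ← Finset.sum_sub_distrib]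
    refine Finset.sum_congr rfl fun x _ => ?_
    rw [real_inner_smul_left, inner_sub_right]; ring
  rw [obj_decomp C (Function.update W i a) i, obj_decomp C W i, hip]
  simp only [Function.update_self]
  have e1 : ∑ q ∈ Finset.univ.erase i,
      C i q * ⟪a, Function.update W i a q⟫ = A := by
    refine Finset.sum_congr rfl fun q hq => ?_
    rw [hne q hq, real_inner_comm]
  have e2 : ∑ p ∈ Finset.univ.erase i,
      C p i * ⟪Function.update W i a p, a⟫ = A := by
    refine Finset.sum_congr rfl fun p hp => ?_
    rw [hne p hp, hCs p i]
  have e3 : ∑ p ∈ Finset.univ.erase i, ∑ q ∈ Finset.univ.erase i,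
      C p q * ⟪Function.update W i a p, Function.update W i a q⟫
      = ∑ p ∈ Finset.univ.erase i, ∑ q ∈ Finset.univ.erase i, C p q * ⟪W p, W q⟫ := by
    refine Finset.sum_congr rfl fun p hp => Finset.sum_congr rfl fun q hq => ?_
    rw [hne p hp, hne q hq]
  have e4 : ∑ q ∈ Finset.univ.erase i, C i q * ⟪W i, W q⟫ = B := by
    refine Finset.sum_congr rfl fun q hq => ?_
    rw [real_inner_comm]
  have e5 : ∑ p ∈ Finset.univ.erase i, C p i * ⟪W p, W i⟫ = B := by
    refine Finset.sum_congr rfl fun p hp => ?_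
    rw [hCs p i]
  rw [e1, e2, e3, e4, e5]
  ring

/-- Along well-defined iterates `V⁰, V¹, V², …` of Mixing Method++ (each `V^{ℓ+1}` being
one pass from `V^ℓ`), the objective values are non-increasing and converge, and some
subsequence of the iterates converges to a feasible `V̄` attaining the limiting value. -/
theorem mixing_pp_limit_point {n k : ℕ}
    (C : Matrix (Fin n) (Fin n) ℝ) (hC : C.IsSymm)
    (β : ℝ) (hβ0 : 0 ≤ β) (hβ1 : β < 1)
    (V : ℕ → Fin n → EuclideanSpace ℝ (Fin k))
    (g u : ℕ → Fin n → EuclideanSpace ℝ (Fin k)) (y w : ℕ → Fin n → ℝ)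
    (hV0 : ∀ i, ‖V 0 i‖ = 1)
    (hg : ∀ ℓ i, g ℓ i =
        (∑ j ∈ Finset.univ.filter (fun j => j < i), C i j • V (ℓ + 1) j) +
        ∑ j ∈ Finset.univ.filter (fun j => i < j), C i j • V ℓ j)
    (hy : ∀ ℓ i, y ℓ i = ‖g ℓ i‖) (hypos : ∀ ℓ i, 0 < y ℓ i)
    (hu : ∀ ℓ i, u ℓ i = -((y ℓ i)⁻¹ • g ℓ i))
    (hw : ∀ ℓ i, w ℓ i = ‖(1 + β) • u ℓ i - β • V ℓ i‖)
    (hnext : ∀ ℓ i, V (ℓ + 1) i = (w ℓ i)⁻¹ • ((1 + β) • u ℓ i - β • V ℓ i)) :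
    (∀ ℓ : ℕ, obj C (V (ℓ + 1)) ≤ obj C (V ℓ)) ∧
    ∃ Lval : ℝ, Tendsto (fun ℓ => obj C (V ℓ)) atTop (𝓝 Lval) ∧
      ∃ Vbar : Fin n → EuclideanSpace ℝ (Fin k), (∀ i, ‖Vbar i‖ = 1) ∧
        ∃ φ : ℕ → ℕ, StrictMono φ ∧
          Tendsto (fun m => V (φ m)) atTop (𝓝 Vbar) ∧ obj C Vbar = Lval := by
  -- every `u ℓ i` is a unit vector
  have hunorm : ∀ ℓ i, ‖u ℓ i‖ = 1 := by
    intro ℓ i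
    rw [hu, norm_neg, norm_smul, Real.norm_eq_abs,
      abs_of_pos (inv_pos.mpr (hypos ℓ i)), ← hy]
    field_simp [(hypos ℓ i).ne']
  -- all iterates have unit-norm columns
  have hVnorm : ∀ ℓ i, ‖V ℓ i‖ = 1 := by
    intro ℓ
    induction ℓ with
    | zero => exact hV0
    | succ ℓ ih =>
      intro i
      have hw1 : 1 ≤ w ℓ i := by
        have h := norm_sub_norm_le ((1 + β) • u ℓ i) (β • V ℓ i)
        rw [norm_smul, norm_smul, hunorm, ih i, Real.norm_eq_abs, Real.norm_eq_abs,
          abs_of_nonneg (by linarith : (0:ℝ) ≤ 1 + β), abs_of_nonneg hβ0] at h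
        rw [hw]; linarith
      have hwpos : 0 < w ℓ i := lt_of_lt_of_le one_pos hw1
      rw [hnext, norm_smul, Real.norm_eq_abs, abs_of_pos (inv_pos.mpr hwpos), ← hw]
      field_simp [hwpos.ne']
  have hwpos : ∀ ℓ i, 0 < w ℓ i := by
    intro ℓ i
    have h := norm_sub_norm_le ((1 + β) • u ℓ i) (β • V ℓ i)
    rw [norm_smul, norm_smul, hunorm, hVnorm ℓ i, Real.norm_eq_abs, Real.norm_eq_abs,
      abs_of_nonneg (by linarith : (0:ℝ) ≤ 1 + β), abs_of_nonneg hβ0] at h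
    rw [hw]; linarith
  -- key per-column descent inequality
  have key : ∀ ℓ i, ⟪g ℓ i, V (ℓ + 1) i⟫ ≤ ⟪g ℓ i, V ℓ i⟫ := by
    intro ℓ i
    have hyne : (y ℓ i) ≠ 0 := (hypos ℓ i).ne'
    have hgu : ⟪g ℓ i, u ℓ i⟫ = -(y ℓ i) := by
      rw [hu, inner_neg_right, real_inner_smul_right, real_inner_self_eq_norm_sq, ← hy]
      field_simp
    have hub : ⟪u ℓ i, V ℓ i⟫ = -((y ℓ i)⁻¹ * ⟪g ℓ i, V ℓ i⟫) := by
      rw [hu, inner_neg_left, real_inner_smul_left]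
    have ht : |⟪g ℓ i, V ℓ i⟫| ≤ y ℓ i := by
      have h := abs_real_inner_le_norm (g ℓ i) (V ℓ i)
      rw [hVnorm ℓ i, mul_one, ← hy] at h
      exact h
    have hw2 : (w ℓ i)^2 * (y ℓ i)
        = ((1+β)^2 + β^2) * (y ℓ i) + 2*β*(1+β)*⟪g ℓ i, V ℓ i⟫ := by
      have e : (w ℓ i)^2 = ‖(1 + β) • u ℓ i‖^2
          - 2 * ⟪(1 + β) • u ℓ i, β • V ℓ i⟫ + ‖β • V ℓ i‖^2 := by
        rw [hw]; exact norm_sub_sq_real _ _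
      rw [norm_smul, norm_smul, hunorm, hVnorm ℓ i, real_inner_smul_left,
        real_inner_smul_right, hub, Real.norm_eq_abs, Real.norm_eq_abs,
        abs_of_nonneg (by linarith : (0:ℝ) ≤ 1 + β), abs_of_nonneg hβ0] at e
      rw [e]
      field_simp
      ring
    have hVnext : ⟪g ℓ i, V (ℓ + 1) i⟫
        = (w ℓ i)⁻¹ * (-((1+β)*(y ℓ i)) - β*⟪g ℓ i, V ℓ i⟫) := by
      rw [hnext, real_inner_smul_right, inner_sub_right, real_inner_smul_right,
        real_inner_smul_right, hgu]
      ring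
    rw [hVnext]
    exact key_scalar β (y ℓ i) _ (w ℓ i) hβ0 hβ1 (hypos ℓ i) ht (hwpos ℓ i) hw2
  -- one full pass does not increase the objective
  have hstep : ∀ ℓ : ℕ, obj C (V (ℓ + 1)) ≤ obj C (V ℓ) := by
    intro ℓ
    set Wm : ℕ → Fin n → EuclideanSpace ℝ (Fin k) :=
      fun m j => if (j : ℕ) < m then V (ℓ + 1) j else V ℓ j with hWm
    have hW0 : Wm 0 = V ℓ := funext fun j => by simp [hWm]
    have hWn : Wm n = V (ℓ + 1) := funext fun j => by simp [hWm, j.isLt]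
    have hdec : ∀ m, m < n → obj C (Wm (m + 1)) ≤ obj C (Wm m) := by
      intro m hm
      set i : Fin n := ⟨m, hm⟩ with hi
      have hWi : Wm m i = V ℓ i := by simp [hWm, hi]
      have hupdate : Wm (m + 1) = Function.update (Wm m) i (V (ℓ + 1) i) := by
        funext j
        by_cases hji : j = i
        · subst hji
          simp [hWm, Function.update_self, hi]
        · rw [Function.update_of_ne hji]
          have : (j : ℕ) ≠ m := fun h => hji (Fin.ext (by simp [hi, h]))
          simp only [hWm]
          by_cases h2 : (j : ℕ) < m
          · rw [if_pos h2, if_pos (by omega)]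
          · rw [if_neg h2, if_neg (by omega)]
      have hgeq : ∑ j ∈ Finset.univ.erase i, C i j • Wm m j = g ℓ i := by
        rw [hg]
        have hsplit : Finset.univ.erase i
            = Finset.univ.filter (fun j => j < i) ∪ Finset.univ.filter (fun j => i < j) := by
          ext j
          simp only [Finset.mem_erase, Finset.mem_univ, Finset.mem_union, Finset.mem_filter,
            true_and, and_true]
          constructor
          · intro h; exact lt_or_gt_of_ne h
          · rintro (h | h)
            · exact ne_of_lt h
            · exact ne_of_gt h
        have hdisj : Disjoint (Finset.univ.filter (fun j => j < i))
            (Finset.univ.filter (fun j => i < j)) := by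
          rw [Finset.disjoint_filter]
          intro x _ h1 h2
          exact absurd (h1.trans h2) (lt_irrefl x)
        rw [hsplit, Finset.sum_union hdisj]
        congr 1
        · refine Finset.sum_congr rfl fun j hj => ?_
          have hjlt : j < i := (Finset.mem_filter.mp hj).2
          have : (j : ℕ) < m := hjlt
          simp [hWm, this]
        · refine Finset.sum_congr rfl fun j hj => ?_
          have hjgt : i < j := (Finset.mem_filter.mp hj).2
          have : ¬ (j : ℕ) < m := by
            have : (m : ℕ) < (j : ℕ) := hjgt
            omega
          simp [hWm, this]
      have hA : ⟪V (ℓ+1) i, V (ℓ+1) i⟫ - ⟪Wm m i, Wm m i⟫ = 0 := by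
        rw [hWi, real_inner_self_eq_norm_sq, real_inner_self_eq_norm_sq,
          hVnorm (ℓ+1) i, hVnorm ℓ i]
        norm_num
      have hB : ⟪g ℓ i, V (ℓ+1) i - Wm m i⟫ ≤ 0 := by
        rw [hWi, inner_sub_right]
        linarith [key ℓ i]
      calc obj C (Wm (m+1)) = obj C (Function.update (Wm m) i (V (ℓ+1) i)) := by rw [hupdate]
        _ = obj C (Wm m) + 2 * ⟪∑ j ∈ Finset.univ.erase i, C i j • Wm m j,
              V (ℓ+1) i - Wm m i⟫ + C i i * (⟪V (ℓ+1) i, V (ℓ+1) i⟫ - ⟪Wm m i, Wm m i⟫) :=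
            obj_update C hC _ _ _
        _ ≤ obj C (Wm m) := by rw [hgeq, hA]; linarith [hB]
    have hall : ∀ m, m ≤ n → obj C (Wm m) ≤ obj C (Wm 0) := by
      intro m
      induction m with
      | zero => intro _; exact le_refl _
      | succ m ih =>
        intro hm
        exact (hdec m (by omega)).trans (ih (by omega))
    calc obj C (V (ℓ+1)) = obj C (Wm n) := by rw [hWn]
      _ ≤ obj C (Wm 0) := hall n le_rfl
      _ = obj C (V ℓ) := by rw [hW0]
  refine ⟨hstep, ?_⟩
  -- convergence of the objective values
  have hanti : Antitone (fun ℓ => obj C (V ℓ)) := antitone_nat_of_succ_le hstep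
  have hbound : ∀ ℓ, -(∑ i, ∑ j, |C i j|) ≤ obj C (V ℓ) := by
    intro ℓ
    rw [← Finset.sum_neg_distrib]
    refine Finset.sum_le_sum fun i _ => ?_
    rw [← Finset.sum_neg_distrib]
    refine Finset.sum_le_sum fun j _ => ?_
    have h1 : |⟪V ℓ i, V ℓ j⟫| ≤ 1 := by
      have := abs_real_inner_le_norm (V ℓ i) (V ℓ j)
      rw [hVnorm ℓ i, hVnorm ℓ j] at this; simpa using this
    calc -|C i j| ≤ -|C i j * ⟪V ℓ i, V ℓ j⟫| := by
          rw [abs_mul]; nlinarith [abs_nonneg (C i j)]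
      _ ≤ C i j * ⟪V ℓ i, V ℓ j⟫ := neg_abs_le _
  have hbdd : BddBelow (Set.range fun ℓ => obj C (V ℓ)) := by
    refine ⟨-(∑ i, ∑ j, |C i j|), ?_⟩
    rintro x ⟨ℓ, rfl⟩
    exact hbound ℓ
  have hL : Tendsto (fun ℓ => obj C (V ℓ)) atTop
      (𝓝 (⨅ ℓ, obj C (V ℓ))) := tendsto_atTop_ciInf hanti hbdd
  refine ⟨_, hL, ?_⟩
  -- compactness: extract a convergent subsequence
  have hScomp : IsCompact (Set.univ.pi fun _ : Fin n =>
      Metric.sphere (0 : EuclideanSpace ℝ (Fin k)) 1) :=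
    isCompact_univ_pi fun _ => isCompact_sphere 0 1
  have hmem : ∀ ℓ, V ℓ ∈ Set.univ.pi fun _ : Fin n =>
      Metric.sphere (0 : EuclideanSpace ℝ (Fin k)) 1 := by
    intro ℓ
    rw [Set.mem_univ_pi]
    intro i
    rw [mem_sphere_zero_iff_norm]
    exact hVnorm ℓ i
  obtain ⟨Vbar, hVbarS, φ, hφ, hconv⟩ := hScomp.tendsto_subseq hmem
  have hVbarnorm : ∀ i, ‖Vbar i‖ = 1 := by
    intro i
    have := hVbarS i (Set.mem_univ i)
    rwa [mem_sphere_zero_iff_norm] at this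
  refine ⟨Vbar, hVbarnorm, φ, hφ, hconv, ?_⟩
  have hcont : Continuous (obj (n := n) (k := k) C) := by
    unfold obj
    exact continuous_finset_sum _ fun i _ => continuous_finset_sum _ fun j _ =>
      continuous_const.mul ((continuous_apply i).inner (continuous_apply j))
  exact tendsto_nhds_unique ((hcont.tendsto Vbar).comp hconv)
    (hL.comp (hφ.tendsto_atTop))
end
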